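/- Let Δ and Θ be distributions over a set S and let R ⊆ S × S be an equivalence relation. Then Δ R† Θ if and only if Δ(C) = Θ(C) for every equivalence class C ∈ S/R, where Δ(C) denotes the accumulation probability Σ_{s∈C} Δ(s). -/

import Mathlib

/-!
Both lifting rules preserve the mass of every `R`-class (a point distribution puts mass one on
the class of its support, and class masses are linear), which gives one direction. Conversely, if
`Δ` and `Θ` agree on every class `C`, then `q(s, t) = Δ(s) Θ(t) / Δ(C)` for `s, t ∈ C` (and `0`
across classes) is a coupling of `Δ` and `Θ` supported on `R`, and any such coupling writes
`(Δ, Θ)` as the convex combination of the related pairs of point distributions `(s̄, t̄)`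
weighted by `q(s, t)`.
-/

open scoped Classical

/-- A (discrete) probability distribution over a finite set `S`. -/
structure FDist (S : Type*) [Fintype S] where
  f : S → ℝ
  nonneg : ∀ s, 0 ≤ f s
  sum_one : ∑ s, f s = 1

/-- The point distribution at `s`. -/
noncomputable def FDist.point {S : Type*} [Fintype S] (s : S) : FDist S where
  f := fun u => if u = s then 1 else 0
  nonneg := by intro u; show 0 ≤ (if u = s then (1 : ℝ) else 0); split <;> norm_num
  sum_one := by simp

/-- The lifting `R†` of a relation to distributions: the smallest relation
relating point distributions of related states and closed under convex
combinations. -/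
inductive Lift {S T : Type*} [Fintype S] [Fintype T] (R : S → T → Prop) :
    FDist S → FDist T → Prop
  | point {s : S} {t : T} :
      R s t → Lift R (FDist.point s) (FDist.point t)
  | convex (I : Finset ℕ) (p : ℕ → ℝ)
      (hp : ∀ i ∈ I, 0 ≤ p i) (hsum : ∑ i ∈ I, p i = 1)
      (Δs : ℕ → FDist S) (Θs : ℕ → FDist T)
      (h : ∀ i ∈ I, Lift R (Δs i) (Θs i))
      (Δ : FDist S) (Θ : FDist T)
      (hΔ : Δ.f = ∑ i ∈ I, p i • (Δs i).f)
      (hΘ : Θ.f = ∑ i ∈ I, p i • (Θs i).f) :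
      Lift R Δ Θ

namespace FDist

variable {S : Type*} [Fintype S]

theorem point_apply (s u : S) : (point s).f u = if u = s then 1 else 0 := rfl

noncomputable def classMass (R : S → S → Prop) (Δ : FDist S) (s : S) : ℝ :=
  ∑ t, if R s t then Δ.f t else 0

variable {R : S → S → Prop}

theorem classMass_point (s c : S) : classMass R (point c) s = if R s c then 1 else 0 := by
  simp only [classMass, point_apply]
  rw [Fintype.sum_eq_single c fun t ht => by simp [ht]]
  simp

theorem classMass_eq_sum {ι : Type*} (I : Finset ι) (p : ι → ℝ) (Δs : ι → FDist S) {Δ : FDist S}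
    (hΔ : Δ.f = ∑ i ∈ I, p i • (Δs i).f) (s : S) :
    classMass R Δ s = ∑ i ∈ I, p i * classMass R (Δs i) s := by
  simp only [classMass, hΔ, Finset.sum_apply, Pi.smul_apply, smul_eq_mul, Finset.mul_sum,
    ← Finset.sum_filter]
  exact Finset.sum_comm

theorem classMass_nonneg (Δ : FDist S) (s : S) : 0 ≤ classMass R Δ s := by
  rw [classMass, ← Finset.sum_filter]
  exact Finset.sum_nonneg fun t _ => Δ.nonneg t

theorem le_classMass (Δ : FDist S) {s : S} (hs : R s s) : Δ.f s ≤ classMass R Δ s := by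
  rw [classMass, ← Finset.sum_filter]
  exact Finset.single_le_sum (fun t _ => Δ.nonneg t) (by simpa using hs)

theorem classMass_congr (hR : Equivalence R) (Δ : FDist S) {s t : S} (h : R s t) :
    classMass R Δ s = classMass R Δ t := by
  have hst : ∀ u, R s u ↔ R t u := fun u => ⟨hR.trans (hR.symm h), hR.trans h⟩
  simp only [classMass, hst]

/-- On each class `C`, the product of the conditional distributions `Δ(· | C)` and `Θ(· | C)`,
weighted by `Δ(C)`. -/
noncomputable def classCoupling (R : S → S → Prop) (Δ Θ : FDist S) (x : S × S) : ℝ :=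
  if R x.1 x.2 then Δ.f x.1 * Θ.f x.2 / classMass R Δ x.1 else 0

theorem classCoupling_nonneg (Δ Θ : FDist S) (x : S × S) : 0 ≤ classCoupling R Δ Θ x := by
  unfold classCoupling
  split_ifs
  · exact div_nonneg (mul_nonneg (Δ.nonneg _) (Θ.nonneg _)) (classMass_nonneg Δ _)
  · exact le_rfl

theorem sum_classCoupling_left {Δ Θ : FDist S} {s : S} (hs : R s s)
    (h : classMass R Δ s = classMass R Θ s) : ∑ t, classCoupling R Δ Θ (s, t) = Δ.f s := by
  have hΔ : classMass R Δ s = 0 → Δ.f s = 0 := fun h0 =>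
    le_antisymm (h0 ▸ le_classMass Δ hs) (Δ.nonneg s)
  simp only [classCoupling, ← Finset.sum_filter]
  rw [← Finset.sum_div, ← Finset.mul_sum, Finset.sum_filter, ← classMass, ← h,
    mul_div_cancel_of_imp hΔ]

theorem sum_classCoupling_right (hR : Equivalence R) {Δ Θ : FDist S} {t : S}
    (h : classMass R Δ t = classMass R Θ t) : ∑ s, classCoupling R Δ Θ (s, t) = Θ.f t := by
  have hΘ : classMass R Δ t = 0 → Θ.f t = 0 := fun h0 =>
    le_antisymm (h0 ▸ h ▸ le_classMass Θ (hR.refl t)) (Θ.nonneg t)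
  have hsym : ∀ s, classCoupling R Δ Θ (s, t) =
      if R t s then Δ.f s * Θ.f t / classMass R Δ t else 0 := by
    intro s
    by_cases hst : R s t
    · simp [classCoupling, hst, hR.symm hst, classMass_congr hR Δ hst]
    · simp [classCoupling, hst, mt hR.symm hst]
  simp only [hsym, ← Finset.sum_filter]
  rw [← Finset.sum_div, ← Finset.sum_mul, Finset.sum_filter, ← classMass,
    mul_div_cancel_left_of_imp hΘ]

end FDist

namespace Lift

open FDist

section

variable {S T : Type*} [Fintype S] [Fintype T] {R : S → T → Prop}

theorem convex_of_fintype {ι : Type*} [Fintype ι] (p : ι → ℝ) (hp : ∀ i, 0 ≤ p i)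
    (hsum : ∑ i, p i = 1) (Δs : ι → FDist S) (Θs : ι → FDist T)
    (h : ∀ i, p i ≠ 0 → Lift R (Δs i) (Θs i)) {Δ : FDist S} {Θ : FDist T}
    (hΔ : Δ.f = ∑ i, p i • (Δs i).f) (hΘ : Θ.f = ∑ i, p i • (Θs i).f) : Lift R Δ Θ := by
  let _ := Fintype.toEncodable ι
  refine convex ((Finset.univ.filter (p · ≠ 0)).map (Encodable.encode' ι))
    (fun n => (Encodable.decode n).elim 0 p) ?_ ?_ (fun n => (Encodable.decode n).elim Δ Δs)
    (fun n => (Encodable.decode n).elim Θ Θs) ?_ Δ Θ ?_ ?_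
  · simp [Encodable.encode', hp]
  · simp only [Finset.sum_map, Encodable.encode', Function.Embedding.coeFn_mk, Encodable.encodek,
      Option.elim_some]
    rwa [Finset.sum_filter_ne_zero]
  · simpa [Encodable.encode'] using h
  all_goals
    simp only [Finset.sum_map, Encodable.encode', Function.Embedding.coeFn_mk, Encodable.encodek,
      Option.elim_some]
    rwa [Finset.sum_filter_of_ne (p := (p · ≠ 0)) fun i _ hi hp0 => hi (by rw [hp0, zero_smul])]

theorem of_coupling (q : S × T → ℝ) (hq : ∀ x, 0 ≤ q x) (hqR : ∀ x, q x ≠ 0 → R x.1 x.2)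
    {Δ : FDist S} {Θ : FDist T} (hΔ : ∀ s, ∑ t, q (s, t) = Δ.f s)
    (hΘ : ∀ t, ∑ s, q (s, t) = Θ.f t) : Lift R Δ Θ := by
  refine convex_of_fintype q hq ?_ (fun x => FDist.point x.1) (fun x => FDist.point x.2)
    (fun x hx => point (hqR x hx)) ?_ ?_
  · rw [Fintype.sum_prod_type]
    simp only [hΔ, Δ.sum_one]
  · funext u
    simp [Finset.sum_apply, point_apply, Fintype.sum_prod_type_right, ← hΔ]
  · funext u
    simp [Finset.sum_apply, point_apply, Fintype.sum_prod_type, ← hΘ]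

end

variable {S : Type*} [Fintype S] {R : S → S → Prop}

theorem classMass_eq (hR : Equivalence R) {Δ Θ : FDist S} (h : Lift R Δ Θ) (s : S) :
    classMass R Δ s = classMass R Θ s := by
  induction h with
  | @point a b hab =>
    simp only [classMass_point]
    congr 1
    exact propext ⟨fun h => hR.trans h hab, fun h => hR.trans h (hR.symm hab)⟩
  | convex I p _ _ Δs Θs _ Δ Θ hΔ hΘ ih =>
    rw [classMass_eq_sum I p Δs hΔ, classMass_eq_sum I p Θs hΘ]
    exact Finset.sum_congr rfl fun i hi => by rw [ih i hi]

theorem of_classMass_eq (hR : Equivalence R) {Δ Θ : FDist S}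
    (h : ∀ s, classMass R Δ s = classMass R Θ s) : Lift R Δ Θ :=
  of_coupling (classCoupling R Δ Θ) (classCoupling_nonneg Δ Θ)
    (fun _ hx => of_not_not fun hR' => hx (if_neg hR'))
    (fun s => sum_classCoupling_left (hR.refl s) (h s)) (fun t => sum_classCoupling_right hR (h t))

end Lift

/-- For an equivalence relation `R`, `Δ R† Θ` iff `Δ` and `Θ` assign the same
accumulation probability to every equivalence class (the class of `s` being
`{t | R s t}`). -/
theorem lift_iff_classes {S : Type*} [Fintype S]
    (R : S → S → Prop) (hR : Equivalence R) (Δ Θ : FDist S) :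
    Lift R Δ Θ ↔
      ∀ s : S, (∑ t, if R s t then Δ.f t else 0) = ∑ t, if R s t then Θ.f t else 0 :=
  ⟨fun h => h.classMass_eq hR, Lift.of_classMass_eq hR⟩
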